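/- Let A be a commutative ring and I ⊆ A an ideal defining an effective Cartier divisor on Spec(A), i.e., there is a covering sequence (s_1,...,s_n) of A such that each localized ideal I_{s_i} ⊆ A_{s_i} is generated by a single regular element. Then I is a weakly proregular ideal. -/

import Mathlib

/-!
We use an explicit model for the Koszul complex `K(A; aa)` of a finite sequence
`aa = (a_1, ..., a_n)` in a commutative ring `A`: the degree `-q` component is the
free module of functions on the `q`-element subsets of `Fin n` (corresponding to the
basis of `Λ^q(A^n)`), and the differential is contraction against `aa` with the usual
signs.  The transition map `μ_{j,i} : K(A; aa^j) → K(A; aa^i)` multiplies the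
component indexed by a subset `s` by `∏_{k ∈ s} a_k^(j-i)`.

A sequence is weakly proregular if for every `q < 0` the inverse system
`{H^q(K(A; aa^i))}` is pro-zero: for every `i` there is `j ≥ i` such that the
transition map `H^q(K(A; aa^j)) → H^q(K(A; aa^i))` is zero, i.e. every degree `-q`
cocycle at level `j` is sent by `μ_{j,i}` to a coboundary at level `i`.
-/

/-- The degree `-q` component of the Koszul complex on `n` elements. -/
abbrev KoszulDeg (A : Type*) (n q : ℕ) : Type _ :=
  {s : Finset (Fin n) // s.card = q} → A

/-- The Koszul differential `K(A; aa)^{-(q+1)} → K(A; aa)^{-q}`, given by contraction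
against the sequence `aa`, with the usual signs. -/
noncomputable def koszulD {A : Type*} [CommRing A] {n : ℕ} (aa : Fin n → A) (q : ℕ)
    (f : KoszulDeg A n (q + 1)) : KoszulDeg A n q :=
  fun s => ∑ i ∈ (s.val)ᶜ.attach,
    (-1 : A) ^ (s.val.filter (fun k => k < i.val)).card * aa i.val *
      f ⟨insert i.val s.val, by
        rw [Finset.card_insert_of_notMem (Finset.mem_compl.mp i.property), s.property]⟩

/-- The transition map `μ_{j,i}` of the inverse system of Koszul complexes, in degree
`-q`, for exponents `j ≥ i` with `e = j - i`: multiplication by `∏_{k ∈ s} a_k^e` on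
the component indexed by the subset `s`. -/
noncomputable def koszulTransition {A : Type*} [CommRing A] {n : ℕ} (aa : Fin n → A)
    (e q : ℕ) (f : KoszulDeg A n q) : KoszulDeg A n q :=
  fun s => (∏ k ∈ s.val, aa k ^ e) * f s

/-- A finite sequence `aa` in a commutative ring `A` is weakly proregular if for every
`q < 0` the inverse system of Koszul cohomologies `{H^q(K(A; aa^i))}_{i ∈ ℕ}` is
pro-zero: for each `i` there is `j ≥ i` such that every cocycle of `K(A; aa^j)` in
degree `q` becomes a coboundary in `K(A; aa^i)` after applying `μ_{j,i}`. -/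
def IsWeaklyProregular {A : Type*} [CommRing A] {n : ℕ} (aa : Fin n → A) : Prop :=
  ∀ q i : ℕ, ∃ j : ℕ, i ≤ j ∧ ∀ f : KoszulDeg A n (q + 1),
    koszulD (fun k => aa k ^ j) q f = 0 →
    ∃ g : KoszulDeg A n (q + 2),
      koszulD (fun k => aa k ^ i) (q + 1) g = koszulTransition aa (j - i) (q + 1) f

/-- An ideal is weakly proregular if it is generated by a weakly proregular finite
sequence. -/
def Ideal.IsWeaklyProregular {A : Type*} [CommRing A] (I : Ideal A) : Prop :=
  ∃ (n : ℕ) (aa : Fin n → A), Ideal.span (Set.range aa) = I ∧ _root_.IsWeaklyProregular aa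

/-!
Locally on the cover, `I` is generated by a regular element `b`. Then every generator `a_l` of `I`
is a multiple of `b`, and some power `b ^ e` lies in `(a_1 ^ i, ..., a_n ^ i)`, say
`b ^ e = ∑ w_l a_l ^ i`. For a cocycle `f` of `K(a ^ (i + e))` the transition `μ f` is `b ^ e h`,
where `h` is a cocycle of `K(a ^ i)` because `b ^ e` is regular; Cartan's homotopy formula for
exterior multiplication by `w` then shows that `b ^ e h` is a boundary. Boundaries over `A` are
recovered from boundaries over each `A_{s_k}` up to a power of `s_k`, and these glue along the
covering. Finite generation of `I` is itself a local property.
-/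

open Finset

section KoszulComplex

variable {A : Type*} [CommRing A] {n : ℕ}

noncomputable def koszulDₗ (R : Type*) [CommRing R] [Algebra R A] (aa : Fin n → A) (q : ℕ) :
    KoszulDeg A n (q + 1) →ₗ[R] KoszulDeg A n q where
  toFun := koszulD aa q
  map_add' f g := by
    funext s
    simp only [koszulD, Pi.add_apply, mul_add, sum_add_distrib]
  map_smul' c f := by
    funext s
    simp only [koszulD, Pi.smul_apply, smul_sum, mul_smul_comm, RingHom.id_apply]

theorem koszulD_smul (aa : Fin n → A) (q : ℕ) (c : A) (f : KoszulDeg A n (q + 1)) :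
    koszulD aa q (c • f) = c • koszulD aa q f :=
  (koszulDₗ A aa q).map_smul c f

theorem koszulTransition_zero (aa : Fin n → A) (e q : ℕ) :
    koszulTransition aa e q 0 = 0 := by
  funext s
  simp [koszulTransition]

theorem koszulTransition_koszulTransition (aa : Fin n → A) (e e' q : ℕ) (f : KoszulDeg A n q) :
    koszulTransition aa e q (koszulTransition aa e' q f) = koszulTransition aa (e + e') q f := by
  funext s
  simp only [koszulTransition, pow_add, prod_mul_distrib]
  ring

theorem koszulTransition_mul_const (v : Fin n → A) (b : A) (e q : ℕ) (f : KoszulDeg A n q) :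
    koszulTransition (fun k => v k * b) e q f = b ^ (e * q) • koszulTransition v e q f := by
  funext s
  simp only [koszulTransition, Pi.smul_apply, smul_eq_mul, mul_pow, prod_mul_distrib, prod_const,
    s.property, pow_mul]
  ring

theorem koszulD_koszulTransition (aa : Fin n → A) (i e q : ℕ) (f : KoszulDeg A n (q + 1)) :
    koszulD (fun k => aa k ^ i) q (koszulTransition aa e (q + 1) f)
      = koszulTransition aa e q (koszulD (fun k => aa k ^ (i + e)) q f) := by
  funext s
  simp only [koszulD, koszulTransition, mul_sum]
  refine sum_congr rfl fun t _ => ?_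
  rw [prod_insert (mem_compl.mp t.property), pow_add]
  ring

variable {B : Type*} [CommRing B]

theorem map_koszulD (φ : A →+* B) (aa : Fin n → A) (q : ℕ) (f : KoszulDeg A n (q + 1)) :
    φ ∘ koszulD aa q f = koszulD (φ ∘ aa) q (φ ∘ f) := by
  funext s
  simp [koszulD]

theorem map_koszulTransition (φ : A →+* B) (aa : Fin n → A) (e q : ℕ) (f : KoszulDeg A n q) :
    φ ∘ koszulTransition aa e q f = koszulTransition (φ ∘ aa) e q (φ ∘ f) := by
  funext s
  simp [koszulTransition]

end KoszulComplex

section Transition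

variable {A : Type*} [CommRing A] {n : ℕ}

/-- `IsWeaklyProregular aa` unfolds to `∀ q i, ∃ j, i ≤ j ∧ KoszulTransitionIsZero aa q i j`. -/
def KoszulTransitionIsZero (aa : Fin n → A) (q i j : ℕ) : Prop :=
  ∀ f : KoszulDeg A n (q + 1), koszulD (fun k => aa k ^ j) q f = 0 →
    ∃ g : KoszulDeg A n (q + 2),
      koszulD (fun k => aa k ^ i) (q + 1) g = koszulTransition aa (j - i) (q + 1) f

theorem KoszulTransitionIsZero.mono {aa : Fin n → A} {q i j j' : ℕ}
    (h : KoszulTransitionIsZero aa q i j) (hij : i ≤ j) (hjj' : j ≤ j') :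
    KoszulTransitionIsZero aa q i j' := by
  intro f hf
  have hcocycle : koszulD (fun k => aa k ^ j) q (koszulTransition aa (j' - j) (q + 1) f) = 0 := by
    rw [koszulD_koszulTransition, Nat.add_sub_cancel' hjj', hf, koszulTransition_zero]
  obtain ⟨g, hg⟩ := h _ hcocycle
  refine ⟨g, ?_⟩
  rw [hg, koszulTransition_koszulTransition, show j - i + (j' - j) = j' - i by omega]

end Transition

section Homotopy

variable {A : Type*} [CommRing A] {n : ℕ}

/-- Extension by zero to all subsets, so that subsets such as `insert t S` can be used as
indices without carrying cardinality proofs. -/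
noncomputable def KoszulDeg.extend {q : ℕ} (f : KoszulDeg A n q) : Finset (Fin n) → A :=
  fun S => if h : S.card = q then f ⟨S, h⟩ else 0

theorem KoszulDeg.extend_of_card_eq {q : ℕ} (f : KoszulDeg A n q) {S : Finset (Fin n)}
    (h : S.card = q) : KoszulDeg.extend f S = f ⟨S, h⟩ :=
  dif_pos h

/-- Exterior multiplication by `∑ l, dd l • e_l`. -/
noncomputable def koszulWedge (dd : Fin n → A) (q : ℕ) (h : KoszulDeg A n q) :
    KoszulDeg A n (q + 1) :=
  fun s => ∑ u ∈ s.val.attach,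
    (-1 : A) ^ (s.val.filter (fun k => k < u.val)).card * dd u.val *
      h ⟨s.val.erase u.val, by rw [Finset.card_erase_of_mem u.property, s.property]; omega⟩

theorem koszulWedge_zero (dd : Fin n → A) (q : ℕ) : koszulWedge dd q 0 = 0 := by
  funext s
  simp [koszulWedge]

theorem extend_koszulD (aa : Fin n → A) (q : ℕ) (f : KoszulDeg A n (q + 1))
    {S : Finset (Fin n)} (hS : S.card = q) :
    KoszulDeg.extend (koszulD aa q f) S
      = ∑ t ∈ Sᶜ, (-1 : A) ^ (S.filter (· < t)).card * aa t * KoszulDeg.extend f (insert t S) := by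
  rw [KoszulDeg.extend_of_card_eq _ hS, koszulD, ← Finset.sum_attach Sᶜ]
  refine Finset.sum_congr rfl fun t _ => ?_
  rw [KoszulDeg.extend_of_card_eq f (by rw [card_insert_of_notMem (mem_compl.mp t.2), hS])]

theorem extend_koszulWedge (dd : Fin n → A) (q : ℕ) (h : KoszulDeg A n q)
    {S : Finset (Fin n)} (hS : S.card = q + 1) :
    KoszulDeg.extend (koszulWedge dd q h) S
      = ∑ u ∈ S, (-1 : A) ^ (S.filter (· < u)).card * dd u * KoszulDeg.extend h (S.erase u) := by
  rw [KoszulDeg.extend_of_card_eq _ hS, koszulWedge, ← Finset.sum_attach S]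
  refine Finset.sum_congr rfl fun u _ => ?_
  rw [KoszulDeg.extend_of_card_eq h (by rw [card_erase_of_mem u.2, hS]; omega)]

/-- Moving `t ∉ S` into `S` and removing `u ∈ S` in either order gives opposite signs. -/
theorem koszul_sign_anticomm (S : Finset (Fin n)) {t u : Fin n} (ht : t ∉ S) (hu : u ∈ S) :
    (-1 : A) ^ (S.filter (· < t)).card * (-1 : A) ^ ((insert t S).filter (· < u)).card
      = -((-1 : A) ^ (S.filter (· < u)).card * (-1 : A) ^ ((S.erase u).filter (· < t)).card) := by
  rcases lt_or_gt_of_ne (ne_of_mem_of_not_mem hu ht).symm with htu | hut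
  · have h1 : (insert t S).filter (· < u) = insert t (S.filter (· < u)) := by
      rw [filter_insert, if_pos htu]
    have h2 : (S.erase u).filter (· < t) = S.filter (· < t) := by
      rw [filter_erase, erase_eq_of_notMem]
      simp [not_lt.2 htu.le]
    rw [h1, h2, card_insert_of_notMem (fun hmem => ht (mem_filter.mp hmem).1), pow_succ]
    ring
  · have h1 : (insert t S).filter (· < u) = S.filter (· < u) := by
      rw [filter_insert, if_neg (not_lt.2 hut.le)]
    have h2 : S.filter (· < t) = insert u ((S.erase u).filter (· < t)) := by
      rw [filter_erase, insert_erase (mem_filter.mpr ⟨hu, hut⟩)]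
    rw [h1, h2, card_insert_of_notMem (by simp), pow_succ]
    ring

theorem neg_one_pow_mul_self (m : ℕ) : (-1 : A) ^ m * (-1 : A) ^ m = 1 :=
  pow_mul_pow_eq_one m (by simp)

theorem extend_koszulD_koszulWedge (aa dd : Fin n → A) (q : ℕ) (h : KoszulDeg A n (q + 1))
    {S : Finset (Fin n)} (hS : S.card = q + 1) :
    KoszulDeg.extend (koszulD aa (q + 1) (koszulWedge dd (q + 1) h)) S
      = ∑ t ∈ Sᶜ, aa t * dd t * KoszulDeg.extend h S
        + ∑ t ∈ Sᶜ, ∑ u ∈ S, (-1 : A) ^ (S.filter (· < t)).card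
            * (-1 : A) ^ ((insert t S).filter (· < u)).card
            * (aa t * dd u * KoszulDeg.extend h (insert t (S.erase u))) := by
  rw [extend_koszulD _ _ _ hS, ← sum_add_distrib]
  refine sum_congr rfl fun t ht => ?_
  have htS : t ∉ S := mem_compl.mp ht
  have hfilter : (insert t S).filter (· < t) = S.filter (· < t) := by
    rw [filter_insert, if_neg (lt_irrefl t)]
  rw [extend_koszulWedge _ _ _ (by rw [card_insert_of_notMem htS, hS]), sum_insert htS,
    erase_insert htS, hfilter, mul_add, mul_sum]
  congr 1
  · linear_combination (aa t * dd t * KoszulDeg.extend h S) * neg_one_pow_mul_self (A := A) _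
  · refine sum_congr rfl fun u hu => ?_
    rw [erase_insert_of_ne (ne_of_mem_of_not_mem hu htS).symm]
    ring

theorem extend_koszulWedge_koszulD (aa dd : Fin n → A) (q : ℕ) (h : KoszulDeg A n (q + 1))
    {S : Finset (Fin n)} (hS : S.card = q + 1) :
    KoszulDeg.extend (koszulWedge dd q (koszulD aa q h)) S
      = ∑ u ∈ S, aa u * dd u * KoszulDeg.extend h S
        + ∑ u ∈ S, ∑ t ∈ Sᶜ, (-1 : A) ^ (S.filter (· < u)).card
            * (-1 : A) ^ ((S.erase u).filter (· < t)).card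
            * (aa t * dd u * KoszulDeg.extend h (insert t (S.erase u))) := by
  rw [extend_koszulWedge _ _ _ hS, ← sum_add_distrib]
  refine sum_congr rfl fun u hu => ?_
  have hfilter : (S.erase u).filter (· < u) = S.filter (· < u) := by
    rw [filter_erase, erase_eq_of_notMem (by simp)]
  rw [extend_koszulD _ _ _ (by rw [card_erase_of_mem hu, hS]; omega), compl_erase,
    sum_insert (by simp [hu]), insert_erase hu, hfilter, mul_add, mul_sum]
  congr 1
  · linear_combination (aa u * dd u * KoszulDeg.extend h S) * neg_one_pow_mul_self (A := A) _
  · exact sum_congr rfl fun t _ => by ring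

/-- Cartan's homotopy formula for the Koszul complex. -/
theorem koszulD_koszulWedge_add_koszulWedge_koszulD (aa dd : Fin n → A) (q : ℕ)
    (h : KoszulDeg A n (q + 1)) :
    koszulD aa (q + 1) (koszulWedge dd (q + 1) h) + koszulWedge dd q (koszulD aa q h)
      = (∑ l, aa l * dd l) • h := by
  funext ⟨S, hS⟩
  have hcancel : ∑ t ∈ Sᶜ, ∑ u ∈ S, (-1 : A) ^ (S.filter (· < t)).card
            * (-1 : A) ^ ((insert t S).filter (· < u)).card
            * (aa t * dd u * KoszulDeg.extend h (insert t (S.erase u)))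
        + ∑ u ∈ S, ∑ t ∈ Sᶜ, (-1 : A) ^ (S.filter (· < u)).card
            * (-1 : A) ^ ((S.erase u).filter (· < t)).card
            * (aa t * dd u * KoszulDeg.extend h (insert t (S.erase u))) = 0 := by
    rw [sum_comm (s := S), ← sum_add_distrib]
    refine sum_eq_zero fun t ht => ?_
    rw [← sum_add_distrib]
    refine sum_eq_zero fun u hu => ?_
    rw [koszul_sign_anticomm S (mem_compl.mp ht) hu]
    ring
  have hdiag : ∑ t ∈ Sᶜ, aa t * dd t * KoszulDeg.extend h S
      + ∑ u ∈ S, aa u * dd u * KoszulDeg.extend h S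
      = (∑ l, aa l * dd l) * KoszulDeg.extend h S := by
    rw [add_comm, sum_add_sum_compl, sum_mul]
  rw [Pi.add_apply, Pi.smul_apply, smul_eq_mul,
    ← KoszulDeg.extend_of_card_eq (koszulD aa (q + 1) _) hS,
    ← KoszulDeg.extend_of_card_eq (koszulWedge dd q _) hS, ← KoszulDeg.extend_of_card_eq h hS,
    extend_koszulD_koszulWedge _ _ _ _ hS, extend_koszulWedge_koszulD _ _ _ _ hS, ← hdiag]
  linear_combination hcancel

end Homotopy

theorem isWeaklyProregular_of_span_eq_span_singleton {A : Type*} [CommRing A] {m : ℕ}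
    {aa : Fin m → A} {b : A} (hb : b ∈ nonZeroDivisors A)
    (hspan : Ideal.span (Set.range aa) = Ideal.span {b}) :
    IsWeaklyProregular aa := by
  intro q i
  choose v hv using fun l => Ideal.mem_span_singleton'.mp
    (hspan ▸ Ideal.subset_span (Set.mem_range_self l) : aa l ∈ Ideal.span {b})
  have hrad : Ideal.span (Set.range aa) ≤ (Ideal.span (Set.range fun l => aa l ^ i)).radical :=
    Ideal.span_le.mpr <| Set.range_subset_iff.mpr fun l =>
      ⟨i, Ideal.subset_span (Set.mem_range_self l)⟩
  obtain ⟨e, he⟩ := hrad (hspan ▸ Ideal.mem_span_singleton_self b)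
  obtain ⟨w, hw⟩ := (Submodule.mem_span_range_iff_exists_fun A).mp he
  refine ⟨i + e, Nat.le_add_right i e, fun f hf => ?_⟩
  rw [Nat.add_sub_cancel_left]
  set h := b ^ (e * q) • koszulTransition v e (q + 1) f
  have hfactor : koszulTransition aa e (q + 1) f = b ^ e • h := by
    rw [smul_smul, ← pow_add, show e + e * q = e * (q + 1) by ring,
      ← koszulTransition_mul_const, funext hv]
  have hcocycle : koszulD (fun k => aa k ^ i) q h = 0 := by
    have h0 : b ^ e • koszulD (fun k => aa k ^ i) q h = 0 := by
      rw [← koszulD_smul, ← hfactor, koszulD_koszulTransition, hf, koszulTransition_zero]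
    funext s
    exact mem_nonZeroDivisors_iff_left.mp (pow_mem hb e) _ (congr_fun h0 s)
  refine ⟨koszulWedge w (q + 1) h, ?_⟩
  have hcartan := koszulD_koszulWedge_add_koszulWedge_koszulD (fun k => aa k ^ i) w q h
  rwa [hcocycle, koszulWedge_zero, add_zero,
    show ∑ l, aa l ^ i * w l = b ^ e by simpa only [smul_eq_mul, mul_comm] using hw,
    ← hfactor] at hcartan

theorem LinearMap.exists_pow_smul_mem_range_of_isLocalizedModule {R M N M' N' : Type*}
    [CommSemiring R] [AddCommMonoid M] [AddCommMonoid N] [AddCommMonoid M'] [AddCommMonoid N']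
    [Module R M] [Module R N] [Module R M'] [Module R N'] (r : R) {f : M →ₗ[R] M'}
    {g : N →ₗ[R] N'} [IsLocalizedModule.Away r f] [IsLocalizedModule.Away r g]
    {D : M →ₗ[R] N} {D' : M' →ₗ[R] N'} (hD : D' ∘ₗ f = g ∘ₗ D) {x : N}
    (hx : g x ∈ LinearMap.range D') : ∃ k : ℕ, r ^ k • x ∈ LinearMap.range D := by
  obtain ⟨y', hy'⟩ := hx
  obtain ⟨k, y, hy⟩ := IsLocalizedModule.Away.surj f r y'
  have hgy : g (D y) = g (r ^ k • x) := by
    rw [← LinearMap.comp_apply, ← hD, LinearMap.comp_apply, ← hy, map_smul, hy', map_smul]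
  obtain ⟨l, hl⟩ := IsLocalizedModule.Away.exists_of_eq (f := g) r hgy
  exact ⟨l + k, r ^ l • y, by rw [map_smul, hl, pow_add, mul_smul]⟩

section Localization

variable {A : Type*} [CommRing A] {n : ℕ}

theorem exists_pow_smul_koszulD_eq_koszulTransition (r : A) (B : Type*) [CommRing B]
    [Algebra A B] [IsLocalization.Away r B] {aa : Fin n → A} {q i j : ℕ}
    (h : KoszulTransitionIsZero (algebraMap A B ∘ aa) q i j) {f : KoszulDeg A n (q + 1)}
    (hf : koszulD (fun k => aa k ^ j) q f = 0) :
    ∃ k : ℕ, r ^ k • koszulTransition aa (j - i) (q + 1) f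
      ∈ LinearMap.range (koszulDₗ A (fun k => aa k ^ i) (q + 1)) := by
  have hpow (e : ℕ) : (fun k => (algebraMap A B ∘ aa) k ^ e) = algebraMap A B ∘ fun k => aa k ^ e :=
    funext fun k => (map_pow _ _ _).symm
  obtain ⟨g, hg⟩ := h (algebraMap A B ∘ f) (by rw [hpow, ← map_koszulD, hf]; funext; simp)
  refine LinearMap.exists_pow_smul_mem_range_of_isLocalizedModule r
    (f := .pi fun σ => Algebra.linearMap A B ∘ₗ .proj σ)
    (g := .pi fun σ => Algebra.linearMap A B ∘ₗ .proj σ)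
    (D' := koszulDₗ A (fun k => (algebraMap A B ∘ aa) k ^ i) (q + 1)) ?_ ⟨g, ?_⟩
  · refine LinearMap.ext fun x => ?_
    exact (congrArg (koszulD · (q + 1) _) (hpow i)).trans (map_koszulD _ _ _ x).symm
  · exact hg.trans (map_koszulTransition _ _ _ _ f).symm

end Localization

theorem isWeaklyProregular_of_isLocalization_away {A : Type*} [CommRing A] {ι : Type*}
    [Fintype ι] (s : ι → A) (hs : Ideal.span (Set.range s) = ⊤) (B : ι → Type*)
    [∀ k, CommRing (B k)] [∀ k, Algebra A (B k)] [∀ k, IsLocalization.Away (s k) (B k)]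
    {n : ℕ} (aa : Fin n → A) (h : ∀ k, IsWeaklyProregular (algebraMap A (B k) ∘ aa)) :
    IsWeaklyProregular aa := by
  intro q i
  choose j hij hj using fun k => h k q i
  refine ⟨i ⊔ univ.sup j, le_sup_left, fun f hf => ?_⟩
  have hloc (k : ι) : KoszulTransitionIsZero (algebraMap A (B k) ∘ aa) q i (i ⊔ univ.sup j) :=
    KoszulTransitionIsZero.mono (hj k) (hij k) (le_sup_of_le_right (le_sup (mem_univ k)))
  obtain ⟨g, hg⟩ := Submodule.mem_of_span_eq_top_of_smul_pow_mem _ _ hs _ fun ⟨_, k, hk⟩ =>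
    hk ▸ exists_pow_smul_koszulD_eq_koszulTransition (s k) (B k) (hloc k) hf
  exact ⟨g, hg⟩

/-- If `I ⊆ A` defines an effective Cartier divisor on `Spec A`, i.e. there is a
covering sequence `(s_1, ..., s_n)` of `A` such that each localized ideal
`I_{s_i} ⊆ A_{s_i}` is generated by a single regular element, then `I` is a weakly
proregular ideal. -/
theorem Ideal.isWeaklyProregular_of_effective_cartier {A : Type*} [CommRing A]
    (I : Ideal A) {n : ℕ} (s : Fin n → A)
    (hcov : Ideal.span (Set.range s) = ⊤)
    (hCartier : ∀ i : Fin n, ∃ b : Localization.Away (s i),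
      (∀ x : Localization.Away (s i), b * x = 0 → x = 0) ∧
      I.map (algebraMap A (Localization.Away (s i))) = Ideal.span {b}) :
    I.IsWeaklyProregular := by
  choose b hreg hb using hCartier
  obtain ⟨m, aa, haa⟩ := Submodule.fg_iff_exists_fin_generating_family.mp <|
    Ideal.fg_of_localizationSpan _ hcov <| by
      rintro ⟨_, k, rfl⟩
      exact ⟨{b k}, by rw [hb k, Finset.coe_singleton]⟩
  refine ⟨m, aa, haa, isWeaklyProregular_of_isLocalization_away s hcov
    (fun k => Localization.Away (s k)) aa fun k =>
      isWeaklyProregular_of_span_eq_span_singleton (mem_nonZeroDivisors_iff_left.mpr (hreg k)) ?_⟩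
  rw [Set.range_comp, ← Ideal.map_span]
  exact (congrArg _ haa).trans (hb k)
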